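/- arXiv:1804.08349 — 2 statements merged into one kernel-verified Lean document; each statement's English description precedes it below -/
import Mathlib

section
/- Let E, F be real Banach spaces, τ : E → F a C¹ map whose derivative τ'(e) is an isomorphism for every e, and ι : F → [0,∞) a C¹ functional with ι(x) = 0 ⟺ x = 0 and ι'(x) = 0 ⟺ x = 0. If for every f ∈ F the functional φ_f(e) = ι(τ(e) − f) satisfies the Palais–Smale condition (at all levels), then τ is surjective. -/
/-!
Ekeland's variational principle turns any minimizing sequence of the bounded-below functional
`φ_f = ι (τ · - f)` into one along which `‖φ_f'‖ → 0`; by Palais–Smale a subsequence converges,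
and its limit `a` minimizes `φ_f`. Hence `0 = φ_f'(a) = ι'(τ a - f) ∘ τ'(a)`, and as `τ'(a)` is
onto, `ι'(τ a - f) = 0`, i.e. `τ a = f`.
-/

open Filter Topology Set

section Ekeland

variable {X : Type*} [PseudoMetricSpace X] {φ : X → ℝ} {δ : ℝ}

theorem exists_seq_ekeland (hbdd : BddBelow (range φ)) (x₀ : X) :
    ∃ x : ℕ → X, x 0 = x₀ ∧ ∀ n, φ (x (n + 1)) + δ * dist (x n) (x (n + 1)) ≤ φ (x n) ∧
      ∀ y, φ y + δ * dist (x n) y ≤ φ (x n) → φ (x (n + 1)) ≤ φ y + (1 / 2) ^ n := by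
  have hnext : ∀ (n : ℕ) (z : X), ∃ z', φ z' + δ * dist z z' ≤ φ z ∧
      ∀ y, φ y + δ * dist z y ≤ φ z → φ z' ≤ φ y + (1 / 2) ^ n := by
    intro n z
    set S := {y | φ y + δ * dist z y ≤ φ z}
    have hS : (φ '' S).Nonempty := ⟨φ z, z, by simp [S], rfl⟩
    obtain ⟨_, ⟨z', hz', rfl⟩, hlt⟩ := Real.lt_sInf_add_pos hS (ε := (1 / 2) ^ n) (by positivity)
    refine ⟨z', hz', fun y hy => ?_⟩
    have : sInf (φ '' S) ≤ φ y :=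
      csInf_le (hbdd.mono (image_subset_range φ S)) (mem_image_of_mem φ hy)
    linarith
  choose next hnext using hnext
  exact ⟨fun n => Nat.rec x₀ next n, rfl, fun n => hnext n _⟩

theorem add_mul_dist_le_of_forall_succ (hδ : 0 ≤ δ) {x : ℕ → X}
    (hstep : ∀ n, φ (x (n + 1)) + δ * dist (x n) (x (n + 1)) ≤ φ (x n)) {n m : ℕ} (hnm : n ≤ m) :
    φ (x m) + δ * dist (x n) (x m) ≤ φ (x n) := by
  induction m, hnm using Nat.le_induction with
  | base => simp
  | succ m _ ih =>
    have := hstep m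
    nlinarith [dist_triangle (x n) (x m) (x (m + 1))]

theorem LowerSemicontinuous.exists_le_forall_le_add_mul_dist [CompleteSpace X]
    (hφ : LowerSemicontinuous φ) (hbdd : BddBelow (range φ)) (hδ : 0 < δ) (x₀ : X) :
    ∃ x, φ x ≤ φ x₀ ∧ ∀ y, φ x ≤ φ y + δ * dist x y := by
  obtain ⟨x, rfl, hstep⟩ := exists_seq_ekeland (δ := δ) hbdd x₀
  have hchain {n m : ℕ} (hnm : n ≤ m) :=
    add_mul_dist_le_of_forall_succ hδ.le (fun k => (hstep k).1) hnm
  have hanti : Antitone (φ ∘ x) := antitone_nat_of_succ_le fun n => by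
    have := hchain n.le_succ
    have := mul_nonneg hδ.le (dist_nonneg (x := x n) (y := x (n + 1)))
    simp only [Function.comp_apply]
    linarith
  have hbdd' : BddBelow (range (φ ∘ x)) := hbdd.mono (range_comp_subset_range x φ)
  set L := ⨅ n, φ (x n)
  have hLle : ∀ n, L ≤ φ (x n) := ciInf_le hbdd'
  have hL : Tendsto (φ ∘ x) atTop (𝓝 L) := tendsto_atTop_ciInf hanti hbdd'
  have hcauchy : CauchySeq x := by
    refine cauchySeq_of_le_tendsto_0 (fun N => (φ (x N) - L) / δ) (fun n m N hn hm => ?_) ?_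
    · wlog hnm : n ≤ m generalizing n m
      · rw [dist_comm]; exact this m n hm hn (le_of_not_ge hnm)
      rw [le_div_iff₀ hδ]
      have : φ (x n) ≤ φ (x N) := hanti hn
      linarith [hchain hnm, hLle m]
    · simpa using (hL.sub_const L).div_const δ
  obtain ⟨a, ha⟩ := cauchySeq_tendsto_of_complete hcauchy
  have hφa : φ a ≤ L := le_ciInf fun N =>
    (hφ.isClosed_preimage _).mem_of_tendsto ha (eventually_atTop.2 ⟨N, fun _ hn => hanti hn⟩)
  refine ⟨a, hφa.trans (hLle 0), fun y => ?_⟩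
  by_contra! hy
  have hdist : Tendsto (fun n => φ y + δ * dist (x n) y) atTop (𝓝 (φ y + δ * dist a y)) :=
    (ha.dist tendsto_const_nhds).const_mul δ |>.const_add (φ y)
  -- eventually `y` is a competitor in the choice of `x (n + 1)`
  have hev : ∀ᶠ n in atTop, φ (x (n + 1)) ≤ φ y + (1 / 2) ^ n := by
    filter_upwards [hdist.eventually_lt hL (hy.trans_le hφa)] with n hn
    exact (hstep n).2 y hn.le
  have hLy : L ≤ φ y := by
    simpa using le_of_tendsto_of_tendsto ((tendsto_add_atTop_iff_nat 1).2 hL)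
      (tendsto_const_nhds.add (tendsto_pow_atTop_nhds_zero_of_lt_one (by norm_num) (by norm_num)))
      hev
  nlinarith [dist_nonneg (x := a) (y := y)]

end Ekeland

section Critical

variable {E : Type*} [NormedAddCommGroup E] [NormedSpace ℝ E] {φ : E → ℝ}

theorem norm_fderiv_le_of_forall_le_add_mul_dist {x : E} {δ : ℝ} (hφ : DifferentiableAt ℝ φ x)
    (hδ : 0 ≤ δ) (h : ∀ y, φ x ≤ φ y + δ * dist x y) : ‖fderiv ℝ φ x‖ ≤ δ := by
  have hlower : ∀ w, -(δ * ‖w‖) ≤ fderiv ℝ φ x w := by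
    intro w
    set g : ℝ → ℝ := fun t => φ (x + t • w) + δ * ‖w‖ * t
    have hmin : IsLocalMinOn g (Ici 0) 0 := IsMinOn.localize fun t (ht : 0 ≤ t) => by
      simpa [g, dist_eq_norm, norm_smul, abs_of_nonneg ht, mul_comm, mul_left_comm]
        using h (x + t • w)
    have hg : HasDerivAt g (fderiv ℝ φ x w + δ * ‖w‖) 0 := by
      have hray : HasDerivAt (fun t : ℝ => x + t • w) w 0 := by
        simpa using ((hasDerivAt_id (0 : ℝ)).smul_const w).const_add x
      exact ((hφ.hasFDerivAt.comp_hasDerivAt_of_eq 0 hray (by simp)).add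
        ((hasDerivAt_id' (x := (0 : ℝ))).const_mul (δ * ‖w‖))).congr_deriv (by simp)
    have := hmin.hasFDerivWithinAt_nonneg hg.hasFDerivAt.hasFDerivWithinAt (y := 1)
      (mem_posTangentConeAt_of_segment_subset (by simpa using Icc_subset_Ici_self))
    simp only [ContinuousLinearMap.toSpanSingleton_apply, smul_eq_mul, one_mul] at this
    linarith
  refine ContinuousLinearMap.opNorm_le_bound _ hδ fun v => abs_le.2 ⟨hlower v, ?_⟩
  simpa using hlower (-v)

theorem exists_tendsto_iInf_norm_fderiv_tendsto_zero [CompleteSpace E] [Nonempty E]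
    (hφ : Differentiable ℝ φ) (hbdd : BddBelow (range φ)) :
    ∃ x : ℕ → E, Tendsto (fun n => φ (x n)) atTop (𝓝 (⨅ e, φ e)) ∧
      Tendsto (fun n => ‖fderiv ℝ φ (x n)‖) atTop (𝓝 0) := by
  have H : ∀ n : ℕ, ∃ e, φ e < (⨅ e, φ e) + 1 / (n + 1) ∧ ‖fderiv ℝ φ e‖ ≤ 1 / (n + 1) := by
    intro n
    have hε : (0 : ℝ) < 1 / (n + 1) := by positivity
    obtain ⟨x₀, hx₀⟩ := exists_lt_of_ciInf_lt (lt_add_of_pos_right (⨅ e, φ e) hε)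
    obtain ⟨e, he, hmin⟩ :=
      hφ.continuous.lowerSemicontinuous.exists_le_forall_le_add_mul_dist hbdd hε x₀
    exact ⟨e, he.trans_lt hx₀, norm_fderiv_le_of_forall_le_add_mul_dist (hφ e) hε.le hmin⟩
  choose x hxφ hxd using H
  refine ⟨x, ?_, squeeze_zero (fun n => norm_nonneg _) hxd tendsto_one_div_add_atTop_nhds_zero_nat⟩
  exact tendsto_of_tendsto_of_tendsto_of_le_of_le tendsto_const_nhds
    (by simpa using tendsto_one_div_add_atTop_nhds_zero_nat.const_add (⨅ e, φ e))
    (fun n => ciInf_le hbdd _) (fun n => (hxφ n).le)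

def PalaisSmale (φ : E → ℝ) : Prop :=
  ∀ c : ℝ, ∀ x : ℕ → E, Tendsto (fun n => φ (x n)) atTop (𝓝 c) →
    Tendsto (fun n => ‖fderiv ℝ φ (x n)‖) atTop (𝓝 0) →
    ∃ g : ℕ → ℕ, StrictMono g ∧ ∃ a : E, Tendsto (fun n => x (g n)) atTop (𝓝 a)

theorem PalaisSmale.exists_isMinOn [CompleteSpace E] [Nonempty E] (hPS : PalaisSmale φ)
    (hφ : Differentiable ℝ φ) (hbdd : BddBelow (range φ)) : ∃ a, IsMinOn φ univ a := by
  obtain ⟨x, hxφ, hxd⟩ := exists_tendsto_iInf_norm_fderiv_tendsto_zero hφ hbdd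
  obtain ⟨g, hg, a, ha⟩ := hPS _ x hxφ hxd
  have hφa : φ a = ⨅ e, φ e :=
    tendsto_nhds_unique ((hφ.continuous.tendsto a).comp ha) (hxφ.comp hg.tendsto_atTop)
  exact ⟨a, fun e _ => hφa ▸ ciInf_le hbdd e⟩

theorem fderiv_eq_zero_of_fderiv_comp_eq_zero {F G : Type*} [NormedAddCommGroup F]
    [NormedSpace ℝ F] [NormedAddCommGroup G] [NormedSpace ℝ G] {g : F → G} {f : E → F} {a : E}
    (hg : DifferentiableAt ℝ g (f a)) (hf : DifferentiableAt ℝ f a)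
    (hsurj : Function.Surjective (fderiv ℝ f a)) (h : fderiv ℝ (g ∘ f) a = 0) :
    fderiv ℝ g (f a) = 0 := by
  rw [fderiv_comp a hg hf] at h
  ext1 v
  obtain ⟨u, rfl⟩ := hsurj v
  exact congrArg (· u) h

end Critical

theorem stmt_13_general {E F : Type*} [NormedAddCommGroup E] [NormedSpace ℝ E] [CompleteSpace E]
    [NormedAddCommGroup F] [NormedSpace ℝ F] [Nonempty E]
    (τ : E → F) (hτ : ContDiff ℝ 1 τ)
    (hiso : ∀ e : E, ∃ L : E ≃L[ℝ] F, (L : E →L[ℝ] F) = fderiv ℝ τ e)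
    (ι : F → ℝ) (hι : ContDiff ℝ 1 ι) (hιnn : ∀ x, 0 ≤ ι x)
    (hι' : ∀ x : F, fderiv ℝ ι x = 0 ↔ x = 0)
    (hPS : ∀ f : F, ∀ c : ℝ, ∀ x : ℕ → E,
      Filter.Tendsto (fun n => ι (τ (x n) - f)) Filter.atTop (nhds c) →
      Filter.Tendsto (fun n => ‖fderiv ℝ (fun e => ι (τ e - f)) (x n)‖)
        Filter.atTop (nhds 0) →
      ∃ g : ℕ → ℕ, StrictMono g ∧ ∃ a : E,
        Filter.Tendsto (fun n => x (g n)) Filter.atTop (nhds a)) :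
    Function.Surjective τ := by
  intro f
  have hιd : Differentiable ℝ ι := hι.differentiable one_ne_zero
  have hshift : Differentiable ℝ (fun e => τ e - f) := (hτ.differentiable one_ne_zero).sub_const f
  obtain ⟨a, ha⟩ := PalaisSmale.exists_isMinOn (φ := fun e => ι (τ e - f)) (hPS f)
    (hιd.comp hshift) ⟨0, by rintro _ ⟨e, rfl⟩; exact hιnn _⟩
  obtain ⟨L, hL⟩ := hiso a
  have hsurj : Function.Surjective (fderiv ℝ (fun e => τ e - f) a) := by
    rw [fderiv_sub_const, ← hL]
    exact L.surjective
  have hcrit : fderiv ℝ ι (τ a - f) = 0 :=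
    fderiv_eq_zero_of_fderiv_comp_eq_zero (f := fun e => τ e - f) (hιd _) (hshift a) hsurj
      (ha.isLocalMin univ_mem).fderiv_eq_zero
  exact ⟨a, sub_eq_zero.mp ((hι' _).mp hcrit)⟩

/-- If `τ'` is everywhere invertible, `ι` vanishes (with its derivative) only
at `0`, and each functional `φ_f(e) = ι(τ(e) - f)` satisfies the Palais–Smale
condition at all levels, then `τ` is surjective. -/
theorem stmt_13 {E F : Type*} [NormedAddCommGroup E] [NormedSpace ℝ E] [CompleteSpace E]
    [NormedAddCommGroup F] [NormedSpace ℝ F] [CompleteSpace F] [Nonempty E]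
    (τ : E → F) (hτ : ContDiff ℝ 1 τ)
    (hiso : ∀ e : E, ∃ L : E ≃L[ℝ] F, (L : E →L[ℝ] F) = fderiv ℝ τ e)
    (ι : F → ℝ) (hι : ContDiff ℝ 1 ι) (hιnn : ∀ x, 0 ≤ ι x)
    (hι0 : ∀ x : F, ι x = 0 ↔ x = 0)
    (hι' : ∀ x : F, fderiv ℝ ι x = 0 ↔ x = 0)
    (hPS : ∀ f : F, ∀ c : ℝ, ∀ x : ℕ → E,
      Filter.Tendsto (fun n => ι (τ (x n) - f)) Filter.atTop (nhds c) →
      Filter.Tendsto (fun n => ‖fderiv ℝ (fun e => ι (τ e - f)) (x n)‖)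
        Filter.atTop (nhds 0) →
      ∃ g : ℕ → ℕ, StrictMono g ∧ ∃ a : E,
        Filter.Tendsto (fun n => x (g n)) Filter.atTop (nhds a)) :
    Function.Surjective τ :=
  stmt_13_general τ hτ hiso ι hι hιnn hι' hPS
end

section
/- Let F be a Banach space, φ : F → ℝ a C¹ functional, γ : [0,1] → F continuous, ε > 0, α > 0, χ, χ_j : [0,1] → [0,1] continuous with Σ_j χ_j ≤ 1, and g_j ∈ F with ‖g_j‖ = 1. Suppose that for each j and each t in the support of χ_j and each h with ‖h‖ ≤ α, ⟨φ'(γ(t) + h), g_j⟩ < −ε. Then for μ(t) = γ(t) + α χ(t) Σ_j χ_j(t) g_j and any t with χ(t) = 1 and Σ_j χ_j(t) = 1, one has φ(μ(t)) − φ(γ(t)) ≤ −εα. -/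
/-- The key deformation estimate: if the directional derivatives of `φ` near
the path are uniformly below `-ε`, then the deformed path
`μ(t) = γ(t) + αχ(t)∑ⱼχⱼ(t)gⱼ` decreases `φ` by at least `εα` where `χ = 1`
and `∑ⱼ χⱼ = 1`. -/
theorem stmt_18 {F : Type*} [NormedAddCommGroup F] [NormedSpace ℝ F]
    (φ : F → ℝ) (hφ : ContDiff ℝ 1 φ)
    (γ : ℝ → F) (hγ : Continuous γ)
    (ε α : ℝ) (hε : 0 < ε) (hα : 0 < α)
    (k : ℕ) (χ : ℝ → ℝ) (χj : Fin k → ℝ → ℝ) (g : Fin k → F)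
    (hχcont : Continuous χ) (hχjcont : ∀ j, Continuous (χj j))
    (hχrange : ∀ t, χ t ∈ Set.Icc (0:ℝ) 1)
    (hχjrange : ∀ j t, χj j t ∈ Set.Icc (0:ℝ) 1)
    (hsum : ∀ t, ∑ j, χj j t ≤ 1)
    (hg : ∀ j, ‖g j‖ = 1)
    (hkey : ∀ j, ∀ t, χj j t ≠ 0 → ∀ h : F, ‖h‖ ≤ α →
      fderiv ℝ φ (γ t + h) (g j) < -ε)
    (μ : ℝ → F)
    (hμ : ∀ t, μ t = γ t + (α * χ t) • ∑ j, χj j t • g j) :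
    ∀ t : ℝ, χ t = 1 → (∑ j, χj j t) = 1 → φ (μ t) - φ (γ t) ≤ -(ε * α) := by
  intro t hχt hsumt
  set v : F := ∑ j, χj j t • g j with hv
  have hφd : Differentiable ℝ φ := hφ.differentiable one_ne_zero
  -- norm of v is at most 1
  have hvnorm : ‖v‖ ≤ 1 := by
    calc ‖v‖ ≤ ∑ j, ‖χj j t • g j‖ := norm_sum_le _ _
    _ = ∑ j, χj j t := by
        refine Finset.sum_congr rfl fun j _ => ?_
        rw [norm_smul, hg j, mul_one, Real.norm_eq_abs,
          abs_of_nonneg (hχjrange j t).1]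
    _ = 1 := hsumt
  -- derivative bound on the inner scalar function
  have hbound : ∀ s : ℝ, s ∈ Set.Icc (0:ℝ) α →
      fderiv ℝ φ (γ t + s • v) v ≤ -ε := by
    intro s hs
    have hnorm : ‖s • v‖ ≤ α := by
      rw [norm_smul, Real.norm_eq_abs, abs_of_nonneg hs.1]
      calc s * ‖v‖ ≤ s * 1 := by
            exact mul_le_mul_of_nonneg_left hvnorm hs.1
      _ = s := mul_one s
      _ ≤ α := hs.2
    have : fderiv ℝ φ (γ t + s • v) v
        = ∑ j, χj j t * fderiv ℝ φ (γ t + s • v) (g j) := by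
      rw [hv, map_sum]
      exact Finset.sum_congr rfl fun j _ => (fderiv ℝ φ (γ t + s • v)).map_smul _ _
    rw [this]
    calc ∑ j, χj j t * fderiv ℝ φ (γ t + s • v) (g j)
        ≤ ∑ j, χj j t * (-ε) := by
          refine Finset.sum_le_sum fun j _ => ?_
          rcases eq_or_ne (χj j t) 0 with h0 | h0
          · simp [h0]
          · exact mul_le_mul_of_nonneg_left
              (le_of_lt (hkey j t h0 _ hnorm)) (hχjrange j t).1
    _ = -ε := by rw [← Finset.sum_mul, hsumt, one_mul]
  -- the scalar function and its derivative
  set f : ℝ → ℝ := fun s => φ (γ t + s • v) with hf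
  have hderiv : ∀ s : ℝ, HasDerivAt f (fderiv ℝ φ (γ t + s • v) v) s := by
    intro s
    have h1 : HasDerivAt (fun s : ℝ => γ t + s • v) v s := by
      simpa using ((hasDerivAt_id s).smul_const v).const_add (γ t)
    exact ((hφd (γ t + s • v)).hasFDerivAt).comp_hasDerivAt s h1
  -- MVT
  obtain ⟨c, hc, hceq⟩ := exists_hasDerivAt_eq_slope f
      (fun s => fderiv ℝ φ (γ t + s • v) v) hα
      (fun s _ => (hderiv s).continuousAt.continuousWithinAt)
      (fun s _ => hderiv s)
  have hμt : μ t = γ t + α • v := by rw [hμ t, hχt, mul_one]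
  have h0 : f 0 = φ (γ t) := by simp [hf]
  have hA : f α = φ (μ t) := by rw [hμt]
  have hcle : fderiv ℝ φ (γ t + c • v) v ≤ -ε :=
    hbound c ⟨le_of_lt hc.1, le_of_lt hc.2⟩
  rw [hceq] at hcle
  have : f α - f 0 ≤ -ε * α := by
    have := mul_le_mul_of_nonneg_right hcle (le_of_lt hα)
    rwa [sub_zero, div_mul_cancel₀ _ (ne_of_gt hα)] at this
  rw [h0, hA] at this
  linarith
end
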